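/- arXiv:1204.2693 — 3 statements merged into one kernel-verified Lean document; each statement's English description precedes it below -/
import Mathlib

section
/- (Patchwork Theorem) Let φ : P → Q be an order-preserving map of posets, and assume that for every q ∈ Q an acyclic matching M_q on the subposet φ⁻¹(q) is given. Then the union of the matchings M_q over all q ∈ Q is an acyclic matching on P. -/
section Matchings

variable {P : Type*} [PartialOrder P]

/-- `b` covers `a` within the subposet on the subset `S`. -/
def CovByWithin (S : Set P) (a b : P) : Prop :=
  a ∈ S ∧ b ∈ S ∧ a < b ∧ ∀ c ∈ S, a < c → ¬c < b

/-- A partial matching on the subposet of `P` induced on `S`, regarded as a set of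
pairs of elements of `P`: every pair is a covering pair within `S`, and every element
occurs in at most one pair. -/
def IsMatchingOn (S : Set P) (M : Set (P × P)) : Prop :=
  (∀ p ∈ M, CovByWithin S p.1 p.2) ∧
    ∀ p ∈ M, ∀ q ∈ M, (p.1 = q.1 ∨ p.1 = q.2 ∨ p.2 = q.1 ∨ p.2 = q.2) → p = q

/-- A partial matching on the subposet induced on `S` is acyclic if there is no cycle
`a₁ ⋖ b₁ ⋗ a₂ ⋖ b₂ ⋗ ⋯ ⋗ a_k ⋖ b_k ⋗ a₁` with `k ≥ 2`, all `aᵢ` distinct and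
`(aᵢ, bᵢ) ∈ M` (indices mod `k`, covering relations within `S`). -/
def IsAcyclicMatchingOn (S : Set P) (M : Set (P × P)) : Prop :=
  IsMatchingOn S M ∧
    ¬∃ (k : ℕ) (a b : ZMod k → P), 2 ≤ k ∧ Function.Injective a ∧
      ∀ i : ZMod k, (a i, b i) ∈ M ∧ CovByWithin S (a (i + 1)) (b i)

/-- The critical elements of a matching `M` on the subposet induced on `S`: the elements
of `S` occurring in no pair of `M`. -/
def criticalSet (S : Set P) (M : Set (P × P)) : Set P :=
  {x ∈ S | ∀ p ∈ M, p.1 ≠ x ∧ p.2 ≠ x}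

end Matchings

/-!
Since `φ` is monotone, anything strictly between two elements of a fiber lies in the same
fiber, so covering relations inside a fiber are covering relations of `P`, and matched pairs
from different fibers are disjoint. Along a cycle `a₁ ⋖ b₁ ⋗ a₂ ⋖ ⋯`, the fiber index can only
go down (`φ aᵢ₊₁ ≤ φ bᵢ = φ aᵢ`); going around the cycle it must therefore stay constant, so
the cycle lives in a single fiber, where there are none.
-/

theorem ZMod.apply_eq_apply_zero_of_apply_add_one_le {Q : Type*} [PartialOrder Q] {k : ℕ}
    [NeZero k] {q : ZMod k → Q} (hq : ∀ i, q (i + 1) ≤ q i) (i : ZMod k) : q i = q 0 := by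
  have hanti : Antitone fun n : ℕ => q n :=
    antitone_nat_of_succ_le fun n => by simpa only [Nat.cast_succ] using hq n
  have hle : q i ≤ q 0 := by
    simpa only [ZMod.natCast_zmod_val, Nat.cast_zero] using hanti (Nat.zero_le i.val)
  have hge : q 0 ≤ q i := by
    simpa only [ZMod.natCast_zmod_val, ZMod.natCast_self] using hanti (ZMod.val_lt i).le
  exact le_antisymm hle hge

section Fibers

variable {P Q : Type*} [PartialOrder P] [PartialOrder Q] {φ : P → Q}

theorem CovByWithin.of_univ {S : Set P} {a b : P} (h : CovByWithin Set.univ a b)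
    (ha : a ∈ S) (hb : b ∈ S) : CovByWithin S a b :=
  ⟨ha, hb, h.2.2.1, fun c _ => h.2.2.2 c trivial⟩

theorem CovByWithin.univ_of_fiber (hφ : Monotone φ) {q : Q} {a b : P}
    (h : CovByWithin (φ ⁻¹' {q}) a b) : CovByWithin Set.univ a b := by
  obtain ⟨ha, hb, hab, hcov⟩ := h
  refine ⟨trivial, trivial, hab, fun c _ hac hcb => hcov c ?_ hac hcb⟩
  exact le_antisymm (hb ▸ hφ hcb.le) (ha ▸ hφ hac.le)

theorem IsMatchingOn.iUnion_fibers (hφ : Monotone φ) {M : Q → Set (P × P)}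
    (hM : ∀ q, IsMatchingOn (φ ⁻¹' {q}) (M q)) : IsMatchingOn Set.univ (⋃ q, M q) := by
  refine ⟨fun p hp => ?_, fun p hp p' hp' hshare => ?_⟩
  · obtain ⟨q, hpq⟩ := Set.mem_iUnion.mp hp
    exact ((hM q).1 p hpq).univ_of_fiber hφ
  · obtain ⟨q, hpq⟩ := Set.mem_iUnion.mp hp
    obtain ⟨q', hpq'⟩ := Set.mem_iUnion.mp hp'
    obtain ⟨e₁, e₂, -⟩ := (hM q).1 p hpq
    obtain ⟨f₁, f₂, -⟩ := (hM q').1 p' hpq'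
    have hqq' : q = q' := by
      simp only [Set.mem_preimage, Set.mem_singleton_iff] at e₁ e₂ f₁ f₂
      rcases hshare with h | h | h | h
      · rw [← e₁, h, f₁]
      · rw [← e₁, h, f₂]
      · rw [← e₂, h, f₁]
      · rw [← e₂, h, f₂]
    subst hqq'
    exact (hM q).2 p hpq p' hpq' hshare

theorem exists_fiber_of_cycle_iUnion (hφ : Monotone φ) {M : Q → Set (P × P)}
    (hM : ∀ q, IsMatchingOn (φ ⁻¹' {q}) (M q)) {k : ℕ} [NeZero k] {a b : ZMod k → P}
    (hcyc : ∀ i, (a i, b i) ∈ ⋃ q, M q ∧ CovByWithin Set.univ (a (i + 1)) (b i)) :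
    ∃ q, ∀ i, (a i, b i) ∈ M q ∧ CovByWithin (φ ⁻¹' {q}) (a (i + 1)) (b i) := by
  choose q hq using fun i => Set.mem_iUnion.mp (hcyc i).1
  have hfib : ∀ i, φ (a i) = q i ∧ φ (b i) = q i := fun i =>
    ⟨((hM (q i)).1 _ (hq i)).1, ((hM (q i)).1 _ (hq i)).2.1⟩
  have hconst := ZMod.apply_eq_apply_zero_of_apply_add_one_le fun i =>
    calc q (i + 1) = φ (a (i + 1)) := (hfib _).1.symm
      _ ≤ φ (b i) := hφ (hcyc i).2.2.2.1.le
      _ = q i := (hfib i).2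
  exact ⟨q 0, fun i => ⟨hconst i ▸ hq i,
    (hcyc i).2.of_univ ((hfib _).1.trans (hconst _)) ((hfib i).2.trans (hconst i))⟩⟩

end Fibers

/-- **Patchwork Theorem.** Let `φ : P → Q` be an order-preserving map of posets and assume
that for every `q ∈ Q` an acyclic matching `M q` on the subposet `φ⁻¹(q)` is given
(regarded as a set of pairs of elements of `P`). Then the union of the matchings `M q`
over all `q ∈ Q` is an acyclic matching on `P`. -/
theorem patchwork {P Q : Type*} [PartialOrder P] [PartialOrder Q]
    (φ : P → Q) (hφ : Monotone φ) (M : Q → Set (P × P))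
    (hM : ∀ q : Q, IsAcyclicMatchingOn (φ ⁻¹' {q}) (M q)) :
    IsAcyclicMatchingOn Set.univ (⋃ q : Q, M q) := by
  have hmatch : ∀ q, IsMatchingOn (φ ⁻¹' {q}) (M q) := fun q => (hM q).1
  refine ⟨IsMatchingOn.iUnion_fibers hφ hmatch, ?_⟩
  rintro ⟨k, a, b, hk, hinj, hcyc⟩
  have : NeZero k := ⟨by omega⟩
  obtain ⟨q, hq⟩ := exists_fiber_of_cycle_iUnion hφ hmatch hcyc
  exact (hM q).2 ⟨k, a, b, hk, hinj, hq⟩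
end

section
/- (Equivariant Patchwork Theorem, existence part) Let a group G act by order isomorphisms on posets P and Q, let φ : P → Q be an order-preserving G-equivariant map, and let R ⊆ Q be a set containing exactly one representative of each G-orbit of Q. Assume that for each r ∈ R a G_r-equivariant acyclic matching M_r on φ⁻¹(r) is given, where G_r = {g ∈ G | g·r = r} is the stabilizer of r, and let C_r denote the set of critical elements of M_r. Then there exists a G-equivariant acyclic matching on P whose set of critical elements is ⋃_{g ∈ G, r ∈ R} g·C_r. -/
/-! The matching is `⋃_{g, r} g • M r`. Its pairs lie in single fibers of `φ`, and over the
fiber of `g • r` it is exactly `g • M r`; this is independent of the choice of `g` because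
`M r` is `G_r`-equivariant. Hence it is a matching, with the stated critical elements. Along a
cycle `a₁ ⋖ b₁ ⋗ a₂ ⋖ ⋯` the values of `φ` weakly decrease cyclically, so the cycle lies in one
fiber `φ⁻¹(g • r)`, and translating by `g⁻¹` gives a cycle of `M r`. -/

open scoped Pointwise

namespace ZMod

theorem apply_eq_of_forall_apply_add_one_le {α : Type*} [PartialOrder α] {k : ℕ} [NeZero k]
    {f : ZMod k → α} (hf : ∀ i, f (i + 1) ≤ f i) (i j : ZMod k) : f i = f j := by
  have hle : ∀ (n : ℕ) (i : ZMod k), f (i + n) ≤ f i := by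
    intro n
    induction n with
    | zero => simp
    | succ n ih => exact fun i => by simpa [add_assoc] using (hf (i + n)).trans (ih i)
  have hle' : ∀ i j : ZMod k, f j ≤ f i := fun i j => by
    simpa [natCast_zmod_val] using hle (j - i).val i
  exact le_antisymm (hle' j i) (hle' i j)

end ZMod

section CovByWithin

variable {P : Type*} [PartialOrder P]

theorem covByWithin_univ_iff {a b : P} : CovByWithin Set.univ a b ↔ a ⋖ b := by
  simp [CovByWithin, CovBy]

theorem Set.OrdConnected.covByWithin_iff {S : Set P} (hS : S.OrdConnected) {a b : P} :
    CovByWithin S a b ↔ a ∈ S ∧ b ∈ S ∧ a ⋖ b := by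
  refine ⟨fun ⟨ha, hb, hab, hmax⟩ => ⟨ha, hb, hab, fun c hac hcb => ?_⟩,
    fun ⟨ha, hb, hab⟩ => ⟨ha, hb, hab.1, fun _ _ => @hab.2 _⟩⟩
  exact hmax c (hS.out ha hb ⟨hac.le, hcb.le⟩) hac hcb

end CovByWithin

theorem smul_covBy_smul {G P : Type*} [Group G] [PartialOrder P] [MulAction G P]
    (hP : ∀ g : G, Monotone (fun x : P => g • x)) (g : G) {a b : P} (h : a ⋖ b) :
    g • a ⋖ g • b :=
  (apply_covBy_apply_iff ((MulAction.toPerm g).toOrderIso (hP g) (hP g⁻¹))).2 h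

theorem IsMatchingOn.subset_prod {P : Type*} [PartialOrder P] {S : Set P} {N : Set (P × P)}
    (hN : IsMatchingOn S N) : N ⊆ S ×ˢ S :=
  fun p hp => ⟨(hN.1 p hp).1, (hN.1 p hp).2.1⟩

def IsOrbitTransversal (G : Type*) {Q : Type*} [Group G] [MulAction G Q] (R : Set Q) : Prop :=
  ∀ q : Q, ∃! r, r ∈ R ∧ r ∈ MulAction.orbit G q

namespace IsOrbitTransversal

variable {G Q : Type*} [Group G] [MulAction G Q] {R : Set Q}

theorem exists_smul_eq (hR : IsOrbitTransversal G R) (q : Q) : ∃ g : G, ∃ r ∈ R, g • r = q := by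
  obtain ⟨r, ⟨hr, g, hg⟩, -⟩ := hR q
  exact ⟨g⁻¹, r, hr, by rw [← hg, inv_smul_smul]⟩

theorem eq_of_smul_eq_smul (hR : IsOrbitTransversal G R) {r s : Q} (hr : r ∈ R) (hs : s ∈ R)
    {g h : G} (hgh : g • r = h • s) : r = s := by
  have hsr : s ∈ MulAction.orbit G r :=
    MulAction.mem_orbit_iff.2 ⟨h⁻¹ * g, by rw [mul_smul, hgh, inv_smul_smul]⟩
  exact (hR r).unique ⟨hr, MulAction.mem_orbit_self r⟩ ⟨hs, hsr⟩

end IsOrbitTransversal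

def patchMatching (G : Type*) {P Q : Type*} [Group G] [MulAction G P] (R : Set Q)
    (M : Q → Set (P × P)) : Set (P × P) :=
  ⋃ g : G, ⋃ r ∈ R, g • M r

section PatchMatching

variable {G P Q : Type*} [Group G] [MulAction G P] {R : Set Q} {M : Q → Set (P × P)}

theorem mem_patchMatching {p : P × P} :
    p ∈ patchMatching G R M ↔ ∃ g : G, ∃ r ∈ R, g⁻¹ • p ∈ M r := by
  simp only [patchMatching, Set.mem_iUnion, Set.mem_smul_set_iff_inv_smul_mem, exists_prop]

theorem subset_patchMatching {r : Q} (hr : r ∈ R) : M r ⊆ patchMatching G R M :=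
  fun p hp => mem_patchMatching.2 ⟨1, r, hr, by rwa [inv_one, one_smul]⟩

theorem smul_mem_patchMatching {p : P × P} (hp : p ∈ patchMatching G R M) (g : G) :
    g • p ∈ patchMatching G R M := by
  obtain ⟨h, r, hr, hq⟩ := mem_patchMatching.1 hp
  exact mem_patchMatching.2 ⟨g * h, r, hr, by rwa [mul_inv_rev, mul_smul, inv_smul_smul]⟩

variable [PartialOrder P] [MulAction G Q] {φ : P → Q}

theorem exists_of_mem_patchMatching (hφG : ∀ (g : G) (x : P), φ (g • x) = g • φ x)
    (hM : ∀ r ∈ R, IsMatchingOn (φ ⁻¹' {r}) (M r)) {p : P × P}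
    (hp : p ∈ patchMatching G R M) :
    ∃ g : G, ∃ r ∈ R, g⁻¹ • p ∈ M r ∧ φ p.1 = g • r ∧ φ p.2 = g • r := by
  obtain ⟨g, r, hr, hq⟩ := mem_patchMatching.1 hp
  obtain ⟨h1, h2⟩ := (hM r hr).subset_prod hq
  refine ⟨g, r, hr, hq, ?_, ?_⟩ <;> rw [← inv_smul_eq_iff, ← hφG]
  exacts [h1, h2]

theorem mem_patchMatching_iff (hφG : ∀ (g : G) (x : P), φ (g • x) = g • φ x)
    (hR : IsOrbitTransversal G R) (hM : ∀ r ∈ R, IsMatchingOn (φ ⁻¹' {r}) (M r))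
    (hMeq : ∀ r ∈ R, ∀ g ∈ MulAction.stabilizer G r, ∀ p ∈ M r, g • p ∈ M r)
    {r : Q} (hr : r ∈ R) {g : G} {p : P × P} (hp : φ p.1 = g • r ∨ φ p.2 = g • r) :
    p ∈ patchMatching G R M ↔ g⁻¹ • p ∈ M r := by
  refine ⟨fun H => ?_, fun H => mem_patchMatching.2 ⟨g, r, hr, H⟩⟩
  obtain ⟨h, s, hs, hq, h1, h2⟩ := exists_of_mem_patchMatching hφG hM H
  have hgh : g • r = h • s := by
    rcases hp with hp | hp
    exacts [hp.symm.trans h1, hp.symm.trans h2]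
  obtain rfl := hR.eq_of_smul_eq_smul hr hs hgh
  have hstab : g⁻¹ * h ∈ MulAction.stabilizer G r := by
    rw [MulAction.mem_stabilizer_iff, mul_smul, ← hgh, inv_smul_smul]
  simpa [mul_smul] using hMeq r hr _ hstab _ hq

theorem mem_criticalSet_patchMatching_iff (hφG : ∀ (g : G) (x : P), φ (g • x) = g • φ x)
    (hR : IsOrbitTransversal G R) (hM : ∀ r ∈ R, IsMatchingOn (φ ⁻¹' {r}) (M r))
    (hMeq : ∀ r ∈ R, ∀ g ∈ MulAction.stabilizer G r, ∀ p ∈ M r, g • p ∈ M r)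
    {r : Q} (hr : r ∈ R) {g : G} {z : P} (hz : φ z = g • r) :
    z ∈ criticalSet Set.univ (patchMatching G R M) ↔
      g⁻¹ • z ∈ criticalSet (φ ⁻¹' {r}) (M r) := by
  constructor
  · rintro ⟨-, H⟩
    refine ⟨by simp [hφG, hz], fun p hp => ?_⟩
    have hgp := H _ (smul_mem_patchMatching (subset_patchMatching hr hp) g)
    exact ⟨fun e => hgp.1 (eq_inv_smul_iff.1 e), fun e => hgp.2 (eq_inv_smul_iff.1 e)⟩
  · rintro ⟨-, H⟩
    refine ⟨trivial, fun p hp => ⟨fun e => ?_, fun e => ?_⟩⟩ <;> subst e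
    · exact (H _ ((mem_patchMatching_iff hφG hR hM hMeq hr (.inl hz)).1 hp)).1 rfl
    · exact (H _ ((mem_patchMatching_iff hφG hR hM hMeq hr (.inr hz)).1 hp)).2 rfl

theorem criticalSet_patchMatching (hφG : ∀ (g : G) (x : P), φ (g • x) = g • φ x)
    (hR : IsOrbitTransversal G R) (hM : ∀ r ∈ R, IsMatchingOn (φ ⁻¹' {r}) (M r))
    (hMeq : ∀ r ∈ R, ∀ g ∈ MulAction.stabilizer G r, ∀ p ∈ M r, g • p ∈ M r) :
    criticalSet Set.univ (patchMatching G R M) =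
      ⋃ (g : G), ⋃ (r : Q), ⋃ (_ : r ∈ R), (fun x => g • x) '' criticalSet (φ ⁻¹' {r}) (M r) := by
  ext z
  simp only [Set.mem_iUnion, Set.mem_image]
  constructor
  · intro hz
    obtain ⟨g, r, hr, hgr⟩ := hR.exists_smul_eq (φ z)
    exact ⟨g, r, hr, g⁻¹ • z,
      (mem_criticalSet_patchMatching_iff hφG hR hM hMeq hr hgr.symm).1 hz, smul_inv_smul g z⟩
  · rintro ⟨g, r, hr, c, hc, rfl⟩
    have hgc : φ (g • c) = g • r := by rw [hφG, show φ c = r from hc.1]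
    exact (mem_criticalSet_patchMatching_iff hφG hR hM hMeq hr hgc).2 (by rwa [inv_smul_smul])

variable [PartialOrder Q]

theorem isMatchingOn_patchMatching (hP : ∀ g : G, Monotone (fun x : P => g • x))
    (hφ : Monotone φ) (hφG : ∀ (g : G) (x : P), φ (g • x) = g • φ x)
    (hR : IsOrbitTransversal G R) (hM : ∀ r ∈ R, IsMatchingOn (φ ⁻¹' {r}) (M r))
    (hMeq : ∀ r ∈ R, ∀ g ∈ MulAction.stabilizer G r, ∀ p ∈ M r, g • p ∈ M r) :
    IsMatchingOn Set.univ (patchMatching G R M) := by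
  refine ⟨fun p hp => ?_, fun p hp q hq hpq => ?_⟩
  · obtain ⟨g, r, hr, hgp⟩ := mem_patchMatching.1 hp
    have hcov := (((Set.ordConnected_singleton.preimage_mono hφ).covByWithin_iff).1
      ((hM r hr).1 _ hgp)).2.2
    simpa [covByWithin_univ_iff] using smul_covBy_smul hP g hcov
  · obtain ⟨g, r, hr, hgp, h1, h2⟩ := exists_of_mem_patchMatching hφG hM hp
    have hfib : φ q.1 = g • r ∨ φ q.2 = g • r := by
      rcases hpq with e | e | e | e
      exacts [.inl (e ▸ h1), .inr (e ▸ h1), .inl (e ▸ h2), .inr (e ▸ h2)]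
    have hgq := (mem_patchMatching_iff hφG hR hM hMeq hr hfib).1 hq
    have hpq' : g⁻¹ • p = g⁻¹ • q := (hM r hr).2 _ hgp _ hgq (by simpa using hpq)
    exact smul_left_cancel _ hpq'

theorem isAcyclicMatchingOn_patchMatching (hP : ∀ g : G, Monotone (fun x : P => g • x))
    (hφ : Monotone φ) (hφG : ∀ (g : G) (x : P), φ (g • x) = g • φ x)
    (hR : IsOrbitTransversal G R) (hM : ∀ r ∈ R, IsAcyclicMatchingOn (φ ⁻¹' {r}) (M r))
    (hMeq : ∀ r ∈ R, ∀ g ∈ MulAction.stabilizer G r, ∀ p ∈ M r, g • p ∈ M r) :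
    IsAcyclicMatchingOn Set.univ (patchMatching G R M) := by
  have hM' r hr := (hM r hr).1
  refine ⟨isMatchingOn_patchMatching hP hφ hφG hR hM' hMeq, ?_⟩
  rintro ⟨k, a, b, hk, ha, hcyc⟩
  have : NeZero k := ⟨by omega⟩
  have hcov i : a (i + 1) ⋖ b i := covByWithin_univ_iff.1 (hcyc i).2
  have hpair i : φ (a i) = φ (b i) := by
    obtain ⟨g, r, -, -, h1, h2⟩ := exists_of_mem_patchMatching hφG hM' (hcyc i).1
    exact h1.trans h2.symm
  have hconst i : φ (a i) = φ (a 0) :=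
    ZMod.apply_eq_of_forall_apply_add_one_le (f := φ ∘ a)
      (fun i => (hφ (hcov i).le).trans_eq (hpair i).symm) i 0
  obtain ⟨g, r, hr, hgr⟩ := hR.exists_smul_eq (φ (a 0))
  have hmem i : g⁻¹ • (a i, b i) ∈ M r :=
    (mem_patchMatching_iff hφG hR hM' hMeq hr (Or.inl ((hconst i).trans hgr.symm))).1 (hcyc i).1
  refine (hM r hr).2 ⟨k, fun i => g⁻¹ • a i, fun i => g⁻¹ • b i, hk,
    (MulAction.injective g⁻¹).comp ha, fun i => ⟨hmem i, ?_⟩⟩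
  exact ((Set.ordConnected_singleton.preimage_mono hφ).covByWithin_iff).2
    ⟨((hM' r hr).subset_prod (hmem (i + 1))).1, ((hM' r hr).subset_prod (hmem i)).2,
      smul_covBy_smul hP g⁻¹ (hcov i)⟩

end PatchMatching

theorem equivariant_patchwork_exists_general {G P Q : Type*} [Group G]
    [PartialOrder P] [PartialOrder Q] [MulAction G P] [MulAction G Q]
    (hP : ∀ g : G, Monotone (fun x : P => g • x))
    (φ : P → Q) (hφ : Monotone φ) (hφG : ∀ (g : G) (x : P), φ (g • x) = g • φ x)
    (R : Set Q) (hR : ∀ q : Q, ∃! r, r ∈ R ∧ r ∈ MulAction.orbit G q)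
    (M : Q → Set (P × P))
    (hM : ∀ r ∈ R, IsAcyclicMatchingOn (φ ⁻¹' {r}) (M r))
    (hMeq : ∀ r ∈ R, ∀ g ∈ MulAction.stabilizer G r, ∀ p ∈ M r,
      (g • p.1, g • p.2) ∈ M r) :
    ∃ M' : Set (P × P),
      IsAcyclicMatchingOn Set.univ M' ∧
      (∀ (g : G), ∀ p ∈ M', (g • p.1, g • p.2) ∈ M') ∧
      criticalSet Set.univ M' =
        ⋃ (g : G), ⋃ (r : Q), ⋃ (_ : r ∈ R),
          (fun x => g • x) '' criticalSet (φ ⁻¹' {r}) (M r) :=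
  ⟨patchMatching G R M, isAcyclicMatchingOn_patchMatching hP hφ hφG hR hM hMeq,
    fun g _ hp => smul_mem_patchMatching hp g,
    criticalSet_patchMatching hφG hR (fun r hr => (hM r hr).1) hMeq⟩

/-- **Equivariant Patchwork Theorem (existence part).** Let a group `G` act by order
isomorphisms on posets `P` and `Q`, let `φ : P → Q` be an order-preserving `G`-equivariant
map, and let `R ⊆ Q` contain exactly one representative of each `G`-orbit of `Q`. Assume
that for each `r ∈ R` a `G_r`-equivariant acyclic matching `M r` on `φ⁻¹(r)` is given,
where `G_r` is the stabilizer of `r`. Then there is a `G`-equivariant acyclic matching on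
`P` whose set of critical elements is `⋃_{g ∈ G, r ∈ R} g • C_r`, where `C_r` is the set
of critical elements of `M r`. -/
theorem equivariant_patchwork_exists {G P Q : Type*} [Group G]
    [PartialOrder P] [PartialOrder Q] [MulAction G P] [MulAction G Q]
    (hP : ∀ g : G, Monotone (fun x : P => g • x))
    (hQ : ∀ g : G, Monotone (fun q : Q => g • q))
    (φ : P → Q) (hφ : Monotone φ) (hφG : ∀ (g : G) (x : P), φ (g • x) = g • φ x)
    (R : Set Q) (hR : ∀ q : Q, ∃! r, r ∈ R ∧ r ∈ MulAction.orbit G q)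
    (M : Q → Set (P × P))
    (hM : ∀ r ∈ R, IsAcyclicMatchingOn (φ ⁻¹' {r}) (M r))
    (hMeq : ∀ r ∈ R, ∀ g ∈ MulAction.stabilizer G r, ∀ p ∈ M r,
      (g • p.1, g • p.2) ∈ M r) :
    ∃ M' : Set (P × P),
      IsAcyclicMatchingOn Set.univ M' ∧
      (∀ (g : G), ∀ p ∈ M', (g • p.1, g • p.2) ∈ M') ∧
      criticalSet Set.univ M' =
        ⋃ (g : G), ⋃ (r : Q), ⋃ (_ : r ∈ R),
          (fun x => g • x) '' criticalSet (φ ⁻¹' {r}) (M r) :=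
  equivariant_patchwork_exists_general hP φ hφ hφG R hR M hM hMeq
end

section
/- For every n ≥ 3, the cardinality of C_n is (n−1)!, where C_n is the set of chains of cardinality n−2 in Π̄_n all of whose members are partitions in which every block not containing 1 is a singleton. -/
/-- The poset `Π̄_n`: set partitions of `Fin n` (modeled as setoids, ordered by refinement,
with the finer partition smaller), with the minimum `⊥` and maximum `⊤` removed. -/
def BarPi (n : ℕ) : Type :=
  {s : Setoid (Fin n) // s ≠ ⊥ ∧ s ≠ ⊤}

instance (n : ℕ) : PartialOrder (BarPi n) :=
  inferInstanceAs (PartialOrder {s : Setoid (Fin n) // s ≠ ⊥ ∧ s ≠ ⊤})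

/-- The natural (relabeling) action of the symmetric group on setoids of `Fin n`. -/
instance permSetoidAction (n : ℕ) : MulAction (Equiv.Perm (Fin n)) (Setoid (Fin n)) where
  smul g s := Setoid.comap (⇑g⁻¹) s
  one_smul s := Setoid.ext fun x y => by first | simp [Setoid.comap_rel] | exact Iff.rfl
  mul_smul g h s := Setoid.ext fun x y => by first | simp [Setoid.comap_rel, Equiv.Perm.mul_apply] | exact Iff.rfl

theorem perm_smul_setoid_rel (n : ℕ) (g : Equiv.Perm (Fin n)) (s : Setoid (Fin n))
    (x y : Fin n) : (g • s) x y ↔ s (g⁻¹ x) (g⁻¹ y) := Iff.rfl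

theorem perm_smul_bot (n : ℕ) (g : Equiv.Perm (Fin n)) :
    g • (⊥ : Setoid (Fin n)) = ⊥ := by
  apply Setoid.ext
  intro x y
  rw [perm_smul_setoid_rel]
  constructor
  · intro h
    have : (⊥ : Setoid (Fin n)) (g⁻¹ x) (g⁻¹ y) := h
    rw [show ⇑(⊥ : Setoid (Fin n)) = (· = ·) from Setoid.bot_def] at this
    have := congrArg g this
    simpa using this
  · intro h
    have : x = y := by rwa [show ⇑(⊥ : Setoid (Fin n)) = (· = ·) from Setoid.bot_def] at h
    subst this
    exact (⊥ : Setoid (Fin n)).iseqv.refl _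

theorem perm_smul_top (n : ℕ) (g : Equiv.Perm (Fin n)) :
    g • (⊤ : Setoid (Fin n)) = ⊤ := by
  apply Setoid.ext
  intro x y
  rw [perm_smul_setoid_rel]

theorem perm_smul_mono (n : ℕ) (g : Equiv.Perm (Fin n)) :
    Monotone (fun s : Setoid (Fin n) => g • s) := by
  intro s t h
  intro x y hxy
  exact Setoid.le_def.mp h hxy

/-- The relabeling action of the symmetric group on `Π̄_n`. -/
instance permBarPiAction (n : ℕ) : MulAction (Equiv.Perm (Fin n)) (BarPi n) where
  smul g s := ⟨g • s.1, by
      constructor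
      · intro h
        apply s.2.1
        have := congrArg (fun t => g⁻¹ • t) h
        simpa [perm_smul_bot] using this
      · intro h
        apply s.2.2
        have := congrArg (fun t => g⁻¹ • t) h
        simpa [perm_smul_top] using this⟩
  one_smul s := Subtype.ext (one_smul _ _)
  mul_smul g h s := Subtype.ext (mul_smul g h s.1)

theorem perm_smul_barPi_mono (n : ℕ) (g : Equiv.Perm (Fin n)) :
    Monotone (fun s : BarPi n => g • s) := by
  intro s t h
  exact perm_smul_mono n g h

/-- The subgroup `S_1 × S_{n-1}` of permutations fixing the distinguished element `0`
(playing the role of `1 ∈ [n]`). -/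
def S1Sn (n : ℕ) [NeZero n] : Subgroup (Equiv.Perm (Fin n)) :=
  MulAction.stabilizer (Equiv.Perm (Fin n)) (0 : Fin n)

/-- The set of partitions in `Π̄_n` in which every block not containing the distinguished
element `0` is a singleton. -/
def blockSet (n : ℕ) [NeZero n] : Set (BarPi n) :=
  {s | ∀ x y : Fin n, s.1 x y → s.1 x 0 ∨ x = y}

/-- The face poset of the nerve of `Π̄_n`: nonempty finite chains in `Π̄_n`, ordered
by inclusion. -/
def FacePoset (n : ℕ) : Type :=
  {c : Finset (BarPi n) // c.Nonempty ∧ IsChain (· ≤ ·) (↑c : Set (BarPi n))}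

instance (n : ℕ) : PartialOrder (FacePoset n) where
  le c d := c.1 ⊆ d.1
  le_refl c := subset_rfl
  le_trans a b c hab hbc := Finset.Subset.trans hab hbc
  le_antisymm a b hab hba := Subtype.ext (Finset.Subset.antisymm hab hba)

noncomputable instance (n : ℕ) : DecidableEq (BarPi n) := Classical.decEq _

/-- The relabeling action of the symmetric group on the face poset. -/
noncomputable instance permFaceAction (n : ℕ) : MulAction (Equiv.Perm (Fin n)) (FacePoset n) where
  smul g c := ⟨c.1.image (fun s => g • s), by
    constructor
    · exact c.2.1.image _
    · intro x hx y hy hxy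
      simp only [Finset.coe_image, Set.mem_image, Finset.mem_coe] at hx hy
      obtain ⟨x', hx', rfl⟩ := hx
      obtain ⟨y', hy', rfl⟩ := hy
      have hxy' : x' ≠ y' := fun h => hxy (by rw [h])
      rcases c.2.2 hx' hy' hxy' with h | h
      · exact Or.inl (perm_smul_barPi_mono n g h)
      · exact Or.inr (perm_smul_barPi_mono n g h)⟩
  one_smul c := by
    apply Subtype.ext
    show c.1.image (fun s => (1 : Equiv.Perm (Fin n)) • s) = c.1
    rw [show (fun s : BarPi n => (1 : Equiv.Perm (Fin n)) • s) = id from funext fun s => one_smul _ s]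
    exact Finset.image_id
  mul_smul g h c := by
    apply Subtype.ext
    show c.1.image (fun s => (g * h) • s) = (c.1.image (fun s => h • s)).image (fun s => g • s)
    rw [Finset.image_image, show ((fun s : BarPi n => g • s) ∘ (fun s => h • s)) = (fun s => (g * h) • s) from funext fun s => (mul_smul g h s).symm]

/-- `C_n`: the chains of cardinality `n - 2` in `Π̄_n` all of whose members lie in
`blockSet n`, i.e. are partitions in which every block not containing `0` is a singleton. -/
def Cn (n : ℕ) [NeZero n] : Set (FacePoset n) :=
  {c | (↑c.1 : Set (BarPi n)) ⊆ blockSet n ∧ c.1.card = n - 2}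

/-- The partition `{{1}, {2, …, n}}` of `[n]`, i.e. `{{0}, {1, …, n-1}}` of `Fin n`,
as a setoid. -/
def alphaSetoid (n : ℕ) [NeZero n] : Setoid (Fin n) :=
  ⟨fun x y => x = y ∨ (x ≠ 0 ∧ y ≠ 0), by
    constructor
    · intro x; exact Or.inl rfl
    · rintro x y (rfl | ⟨hx, hy⟩)
      · exact Or.inl rfl
      · exact Or.inr ⟨hy, hx⟩
    · rintro x y z (rfl | ⟨hx, hy⟩) (rfl | ⟨hy', hz⟩)
      · exact Or.inl rfl
      · exact Or.inr ⟨hy', hz⟩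
      · exact Or.inr ⟨hx, hy⟩
      · exact Or.inr ⟨hx, hz⟩⟩

/-- The partition `{{1}, {2, …, n}}` as an element of `Π̄_n` (requires `n ≥ 3`). -/
def alphaBar (n : ℕ) [NeZero n] (hn : 3 ≤ n) : BarPi n :=
  ⟨alphaSetoid n, by
    constructor
    · intro h
      have h12 : alphaSetoid n ⟨1, by omega⟩ ⟨2, by omega⟩ :=
        Or.inr ⟨by simp [Fin.ext_iff], by simp [Fin.ext_iff]⟩
      rw [h] at h12
      have : (⟨1, by omega⟩ : Fin n) = ⟨2, by omega⟩ := h12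
      simp [Fin.ext_iff] at this
    · intro h
      have h01 : (⊤ : Setoid (Fin n)) 0 ⟨1, by omega⟩ := trivial
      rw [← h] at h01
      rcases h01 with h01 | ⟨h0, _⟩
      · have : (0 : Fin n) = ⟨1, by omega⟩ := h01
        simp [Fin.ext_iff] at this
      · exact h0 rfl⟩

/-- The one-element chain `α_n = {{{1},{2,…,n}}}` in the face poset. -/
def alphaChain (n : ℕ) [NeZero n] (hn : 3 ≤ n) : FacePoset n :=
  ⟨{alphaBar n hn}, Finset.singleton_nonempty _, by
    simp only [Finset.coe_singleton]
    exact Set.Subsingleton.isChain (Set.subsingleton_singleton)⟩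

/-!
A partition in `blockSet n` is determined by the block of `0`, and inclusion of these blocks is
refinement; so `C_n` corresponds to the chains of `n - 2` nonempty proper subsets of the `n - 1`
points other than `0`. Such a chain has exactly one member of each size `1, …, n - 2`, hence is
the flag `{a₀} ⊂ {a₀, a₁} ⊂ ⋯` of a unique injective sequence `a : Fin (n - 2) ↪ {x // x ≠ 0}`,
and there are `(n - 1)! / 1!` of those.
-/

open Finset

section Flags

variable {α : Type*} {k : ℕ}

def initialFlag (a : Fin k ↪ α) (i : Fin k) : Finset α :=
  (Iic i).map a

theorem mem_initialFlag {a : Fin k ↪ α} {i : Fin k} {x : α} :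
    x ∈ initialFlag a i ↔ ∃ j ≤ i, a j = x := by
  simp [initialFlag]

theorem apply_mem_initialFlag {a : Fin k ↪ α} {i j : Fin k} :
    a j ∈ initialFlag a i ↔ j ≤ i := by
  simp [initialFlag]

theorem card_initialFlag (a : Fin k ↪ α) (i : Fin k) : #(initialFlag a i) = i + 1 := by
  simp [initialFlag]

theorem initialFlag_monotone (a : Fin k ↪ α) : Monotone (initialFlag a) :=
  fun _ _ h => map_subset_map.2 (Iic_subset_Iic.2 h)

theorem initialFlag_apply_injective (a : Fin k ↪ α) : Function.Injective (initialFlag a) :=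
  fun i j h => Fin.ext (by simpa [card_initialFlag] using congrArg card h)

theorem initialFlag_injective : Function.Injective (initialFlag : (Fin k ↪ α) → _) := by
  intro a b h
  ext i
  obtain ⟨j, hji, hbj⟩ :=
    mem_initialFlag.1 (h ▸ apply_mem_initialFlag.2 le_rfl : a i ∈ initialFlag b i)
  obtain ⟨l, hlj, hal⟩ :=
    mem_initialFlag.1 (h ▸ apply_mem_initialFlag.2 le_rfl : b j ∈ initialFlag a j)
  have hli : l = i := a.injective (hal.trans hbj)
  rw [← hbj, le_antisymm hji (hli ▸ hlj)]

theorem exists_initialFlag_eq {T : Fin k → Finset α} (hT : Monotone T)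
    (hcard : ∀ i, #(T i) = i + 1) : ∃ a : Fin k ↪ α, initialFlag a = T := by
  have hnew : ∀ i, ∃ x ∈ T i, ∀ j < i, x ∉ T j := by
    intro i
    rcases Nat.eq_zero_or_pos i with hi | hi
    · obtain ⟨x, hx⟩ := card_pos.1 (by rw [hcard]; omega : 0 < #(T i))
      exact ⟨x, hx, fun j hj => absurd hj (by rw [Fin.lt_def]; omega)⟩
    · let i' : Fin k := ⟨i - 1, by omega⟩
      obtain ⟨x, hx, hx'⟩ := exists_mem_notMem_of_card_lt_card
        (by rw [hcard, hcard]; simp only [i']; omega : #(T i') < #(T i))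
      exact ⟨x, hx, fun j hj hxj => hx' (hT (by rw [Fin.le_def]; simp only [i']; omega) hxj)⟩
  choose a haT hanew using hnew
  have ha : Function.Injective a := by
    intro i j hij
    by_contra hne
    rcases lt_or_gt_of_ne hne with h | h
    · exact hanew j i h (hij ▸ haT i)
    · exact hanew i j h (hij ▸ haT j)
  refine ⟨⟨a, ha⟩, funext fun i => eq_of_subset_of_card_le ?_ ?_⟩
  · intro x hx
    obtain ⟨j, hj, rfl⟩ := mem_initialFlag.1 hx
    exact hT hj (haT j)
  · rw [hcard, card_initialFlag]

variable (α k) in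
def gradedChains : Set (Finset (Finset α)) :=
  {𝒞 | IsChain (· ≤ ·) (𝒞 : Set (Finset α)) ∧ #𝒞 = k ∧ ∀ T ∈ 𝒞, #T ∈ Icc 1 k}

theorem card_mem_Icc_iff_nonempty_ne_univ [Fintype α] {T : Finset α} :
    #T ∈ Icc 1 (Fintype.card α - 1) ↔ T.Nonempty ∧ T ≠ univ := by
  rw [mem_Icc, one_le_card, Ne, ← card_eq_iff_eq_univ]
  refine and_congr_right fun hT => ?_
  have := card_le_univ T
  have := hT.card_pos
  omega

variable [DecidableEq α]

theorem image_initialFlag_mem_gradedChains (a : Fin k ↪ α) :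
    univ.image (initialFlag a) ∈ gradedChains α k := by
  refine ⟨?_, ?_, ?_⟩
  · rw [coe_image, coe_univ, Set.image_univ]
    exact (initialFlag_monotone a).isChain_range
  · rw [card_image_of_injective _ (initialFlag_apply_injective a), card_univ, Fintype.card_fin]
  · simp only [mem_image, mem_univ, true_and, forall_exists_index, forall_apply_eq_imp_iff]
    intro i
    rw [card_initialFlag, mem_Icc]
    omega

theorem image_initialFlag_injective :
    Function.Injective fun a : Fin k ↪ α => univ.image (initialFlag a) := by
  intro a b (h : univ.image (initialFlag a) = univ.image (initialFlag b))
  refine initialFlag_injective (funext fun i => ?_)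
  obtain ⟨j, -, hj⟩ := mem_image.1 (h ▸ mem_image_of_mem _ (mem_univ i))
  obtain rfl : j = i := Fin.ext (by simpa [card_initialFlag] using congrArg card hj)
  exact hj.symm

theorem exists_image_initialFlag_eq {𝒞 : Finset (Finset α)} (h𝒞 : 𝒞 ∈ gradedChains α k) :
    ∃ a : Fin k ↪ α, univ.image (initialFlag a) = 𝒞 := by
  obtain ⟨hchain, hcard, hsize⟩ := h𝒞
  have hcard_injOn : Set.InjOn card (𝒞 : Set (Finset α)) := by
    intro T hT U hU hTU
    rcases hchain.total hT hU with h | h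
    · exact eq_of_subset_of_card_le h hTU.ge
    · exact (eq_of_subset_of_card_le h hTU.le).symm
  have hsizes : 𝒞.image card = Icc 1 k :=
    eq_of_subset_of_card_le (image_subset_iff.2 hsize)
      (by rw [card_image_of_injOn hcard_injOn, hcard, Nat.card_Icc]; omega)
  have hex : ∀ i : Fin k, ∃ T ∈ 𝒞, #T = i + 1 := fun i =>
    mem_image.1 (hsizes ▸ mem_Icc.2 ⟨by omega, i.isLt⟩)
  choose T hT𝒞 hTcard using hex
  have hmono : Monotone T := by
    intro i j hij
    rcases hchain.total (hT𝒞 i) (hT𝒞 j) with h | h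
    · exact h
    · obtain rfl : i = j := le_antisymm hij
        (by have := card_le_card h; rw [hTcard, hTcard] at this; rw [Fin.le_def]; omega)
      exact le_rfl
  obtain ⟨a, rfl⟩ := exists_initialFlag_eq hmono hTcard
  refine ⟨a, eq_of_subset_of_card_le (image_subset_iff.2 fun i _ => hT𝒞 i) ?_⟩
  rw [card_image_of_injective _ (initialFlag_apply_injective a), card_univ, Fintype.card_fin,
    hcard]

theorem ncard_gradedChains [Fintype α] :
    (gradedChains α k).ncard = (Fintype.card α).descFactorial k := by
  have hrange : gradedChains α k = Set.range fun a : Fin k ↪ α => univ.image (initialFlag a) :=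
    Set.ext fun 𝒞 => ⟨exists_image_initialFlag_eq, by
      rintro ⟨a, rfl⟩
      exact image_initialFlag_mem_gradedChains a⟩
  rw [hrange, Set.ncard_range_of_injective image_initialFlag_injective, Nat.card_eq_fintype_card,
    Fintype.card_embedding_eq, Fintype.card_fin]

end Flags

section ZeroBlock

variable {n : ℕ} [NeZero n]

def Setoid.ofBlock {X : Type*} (p : X → Prop) : Setoid X where
  r x y := x = y ∨ p x ∧ p y
  iseqv := by
    refine ⟨fun x => Or.inl rfl, ?_, ?_⟩
    · rintro x y (rfl | ⟨hx, hy⟩)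
      exacts [Or.inl rfl, Or.inr ⟨hy, hx⟩]
    · rintro x y z (rfl | ⟨hx, hy⟩) (rfl | ⟨hy', hz⟩)
      exacts [Or.inl rfl, Or.inr ⟨hy', hz⟩, Or.inr ⟨hx, hy⟩, Or.inr ⟨hx, hz⟩]

open Classical in
noncomputable def zeroBlock (s : Setoid (Fin n)) : Finset {x : Fin n // x ≠ 0} :=
  univ.filter fun x => s x 0

@[simp]
theorem mem_zeroBlock {s : Setoid (Fin n)} {x : {x : Fin n // x ≠ 0}} :
    x ∈ zeroBlock s ↔ s x 0 := by
  simp [zeroBlock]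

theorem zeroBlock_monotone : Monotone (zeroBlock : Setoid (Fin n) → _) :=
  fun _ _ h _ hx => mem_zeroBlock.2 (h (mem_zeroBlock.1 hx))

theorem le_of_zeroBlock_subset {s t : BarPi n} (hs : s ∈ blockSet n)
    (h : zeroBlock s.1 ⊆ zeroBlock t.1) : s ≤ t := by
  have hzero : ∀ x, s.1 x 0 → t.1 x 0 := fun x hx => by
    by_cases hx0 : x = 0
    · exact hx0 ▸ t.1.refl 0
    · exact mem_zeroBlock.1 (h (mem_zeroBlock.2 hx : (⟨x, hx0⟩ : {x : Fin n // x ≠ 0}) ∈ _))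
  intro x y hxy
  rcases hs x y hxy with hx | rfl
  · exact t.1.trans (hzero x hx) (t.1.symm (hzero y (s.1.trans (s.1.symm hxy) hx)))
  · exact t.1.refl x

theorem zeroBlock_injOn : Set.InjOn (fun s : BarPi n => zeroBlock s.1) (blockSet n) :=
  fun _ hs _ ht h => le_antisymm (le_of_zeroBlock_subset hs h.le) (le_of_zeroBlock_subset ht h.ge)

theorem zeroBlock_nonempty {s : BarPi n} (hs : s ∈ blockSet n) : (zeroBlock s.1).Nonempty := by
  obtain ⟨x, y, hxy, hne⟩ : ∃ x y, s.1 x y ∧ x ≠ y := by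
    by_contra! h
    exact s.2.1 (Setoid.ext fun x y => by
      rw [Setoid.bot_def]
      exact ⟨h x y, fun e => e ▸ s.1.refl x⟩)
  have hx : s.1 x 0 := (hs x y hxy).resolve_right hne
  by_cases hx0 : x = 0
  · subst hx0
    exact ⟨⟨y, hne.symm⟩, mem_zeroBlock.2 (s.1.symm hxy)⟩
  · exact ⟨⟨x, hx0⟩, mem_zeroBlock.2 hx⟩

theorem zeroBlock_ne_univ (s : BarPi n) : zeroBlock s.1 ≠ univ := by
  intro h
  have hzero : ∀ x, s.1 x 0 := fun x => by
    by_cases hx0 : x = 0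
    · exact hx0 ▸ s.1.refl 0
    · exact mem_zeroBlock.1 (h ▸ mem_univ (⟨x, hx0⟩ : {x : Fin n // x ≠ 0}))
  exact s.2.2 (Setoid.ext fun x y => by
    rw [Setoid.top_def]
    exact ⟨fun _ => trivial, fun _ => s.1.trans (hzero x) (s.1.symm (hzero y))⟩)

theorem exists_mem_blockSet_zeroBlock_eq {T : Finset {x : Fin n // x ≠ 0}} (hT : T.Nonempty)
    (hT' : T ≠ univ) : ∃ s ∈ blockSet n, zeroBlock s.1 = T := by
  -- `0` satisfies `inT` vacuously, so `{x | inT x}` is the block `T ∪ {0}`.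
  let inT : Fin n → Prop := fun x => ∀ hx : x ≠ 0, ⟨x, hx⟩ ∈ T
  have hrel {x y : Fin n} : Setoid.ofBlock inT x y ↔ x = y ∨ inT x ∧ inT y := Iff.rfl
  have hzero : inT 0 := fun h => absurd rfl h
  have hne_bot : Setoid.ofBlock inT ≠ ⊥ := by
    obtain ⟨x, hx⟩ := hT
    intro h
    have := (hrel.2 (Or.inr ⟨fun _ => hx, hzero⟩) : Setoid.ofBlock inT x.1 0)
    rw [h, Setoid.bot_def] at this
    exact x.2 this
  have hne_top : Setoid.ofBlock inT ≠ ⊤ := by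
    obtain ⟨x, hx⟩ : ∃ x, x ∉ T := by
      by_contra! h
      exact hT' (eq_univ_iff_forall.2 h)
    intro h
    have := (h ▸ trivial : Setoid.ofBlock inT x.1 0)
    rcases hrel.1 this with h0 | ⟨hx', -⟩
    exacts [x.2 h0, hx (hx' x.2)]
  refine ⟨⟨Setoid.ofBlock inT, hne_bot, hne_top⟩, ?_, ?_⟩
  · rintro x y (rfl | ⟨hx, -⟩)
    exacts [Or.inr rfl, Or.inl (Or.inr ⟨hx, hzero⟩)]
  · ext x
    rw [mem_zeroBlock, hrel]
    exact ⟨fun h => (h.resolve_left x.2).1 x.2, fun h => Or.inr ⟨fun _ => h, hzero⟩⟩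

end ZeroBlock

section Transfer

variable {n : ℕ} [NeZero n]

theorem card_subtype_ne_zero : Fintype.card {x : Fin n // x ≠ 0} = n - 1 := by
  simp

theorem card_mem_Icc_one_sub_two_iff {T : Finset {x : Fin n // x ≠ 0}} :
    #T ∈ Icc 1 (n - 2) ↔ T.Nonempty ∧ T ≠ univ := by
  rw [← card_mem_Icc_iff_nonempty_ne_univ, card_subtype_ne_zero, Nat.sub_sub]

theorem image_zeroBlock_mem_gradedChains {c : FacePoset n} (hc : c ∈ Cn n) :
    c.1.image (fun s => zeroBlock s.1) ∈ gradedChains {x : Fin n // x ≠ 0} (n - 2) := by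
  obtain ⟨hsub, hcard⟩ := hc
  refine ⟨?_, ?_, ?_⟩
  · rw [coe_image]
    exact Monotone.isChain_image (f := fun s : BarPi n => zeroBlock s.1)
      (fun _ _ h => zeroBlock_monotone h) c.2.2
  · rw [card_image_of_injOn (zeroBlock_injOn.mono hsub), hcard]
  · simp only [mem_image, forall_exists_index, and_imp, forall_apply_eq_imp_iff₂]
    intro s hs
    rw [card_mem_Icc_one_sub_two_iff]
    exact ⟨zeroBlock_nonempty (hsub hs), zeroBlock_ne_univ s⟩

theorem exists_mem_Cn_image_zeroBlock_eq (hn : 3 ≤ n) {𝒞 : Finset (Finset {x : Fin n // x ≠ 0})}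
    (h𝒞 : 𝒞 ∈ gradedChains {x : Fin n // x ≠ 0} (n - 2)) :
    ∃ c ∈ Cn n, c.1.image (fun s => zeroBlock s.1) = 𝒞 := by
  obtain ⟨hchain, hcard, hsize⟩ := h𝒞
  let S : Set (BarPi n) := {s | s ∈ blockSet n ∧ zeroBlock s.1 ∈ 𝒞}
  have hSsub : S ⊆ blockSet n := fun _ hs => hs.1
  have hSfin : S.Finite := Set.Finite.of_finite_image
    (𝒞.finite_toSet.subset (Set.image_subset_iff.2 fun _ hs => hs.2)) (zeroBlock_injOn.mono hSsub)
  have himage : hSfin.toFinset.image (fun s => zeroBlock s.1) = 𝒞 := by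
    ext T
    simp only [mem_image, Set.Finite.mem_toFinset]
    refine ⟨by rintro ⟨s, ⟨-, hs⟩, rfl⟩; exact hs, fun hT => ?_⟩
    obtain ⟨hne, hne_univ⟩ := card_mem_Icc_one_sub_two_iff.1 (hsize T hT)
    obtain ⟨s, hs, rfl⟩ := exists_mem_blockSet_zeroBlock_eq hne hne_univ
    exact ⟨s, ⟨hs, hT⟩, rfl⟩
  have hScard : #hSfin.toFinset = n - 2 := by
    rw [← hcard, ← himage, card_image_of_injOn (zeroBlock_injOn.mono (by simpa using hSsub))]
  have hSchain : IsChain (· ≤ ·) S := by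
    intro s hs t ht hst
    rcases hchain.total hs.2 ht.2 with h | h
    exacts [Or.inl (le_of_zeroBlock_subset hs.1 h), Or.inr (le_of_zeroBlock_subset ht.1 h)]
  refine ⟨⟨hSfin.toFinset, card_pos.1 (by omega), by simpa using hSchain⟩,
    ⟨by simpa using hSsub, hScard⟩, himage⟩

theorem ncard_Cn_eq_ncard_gradedChains (hn : 3 ≤ n) :
    (Cn n).ncard = (gradedChains {x : Fin n // x ≠ 0} (n - 2)).ncard := by
  have himage : (fun c : FacePoset n => c.1.image fun s => zeroBlock s.1) '' Cn n =
      gradedChains {x : Fin n // x ≠ 0} (n - 2) :=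
    Set.ext fun 𝒞 => ⟨by rintro ⟨c, hc, rfl⟩; exact image_zeroBlock_mem_gradedChains hc,
      exists_mem_Cn_image_zeroBlock_eq hn⟩
  rw [← himage, Set.InjOn.ncard_image]
  intro c hc d hd h
  refine Subtype.ext (coe_injective ((zeroBlock_injOn.image_eq_image_iff hc.1 hd.1).1 ?_))
  rw [← coe_image, ← coe_image]
  exact congrArg _ h

end Transfer

/-- For every `n ≥ 3`, the cardinality of `C_n` — the set of chains of cardinality `n - 2`
in `Π̄_n` all of whose members are partitions in which every block not containing the
distinguished element is a singleton — is `(n-1)!`. -/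
theorem card_Cn (n : ℕ) [NeZero n] (hn : 3 ≤ n) :
    (Cn n).ncard = Nat.factorial (n - 1) := by
  rw [ncard_Cn_eq_ncard_gradedChains hn, ncard_gradedChains, card_subtype_ne_zero,
    Nat.descFactorial_eq_div (by omega), show n - 1 - (n - 2) = 1 by omega, Nat.factorial_one,
    Nat.div_one]
end
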